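/- Let v : [0, ∞) → [0, ∞) be a bounded non-decreasing function with v(ε) > 0 for all ε > 0, and assume the learning tuple satisfies the (v, c)-central condition with 0 < c < 1: for all ε ≥ 0, log E_{P_W ⊗ μ}[exp(−v(ε) r(W', Z'))] ≤ −c v(ε) E_{P_W ⊗ μ}[r(W', Z')] + v(ε) ε. Then for every ε ≥ 0 and every η' with 0 < η' ≤ v(ε): E[ℰ(W, Sₙ)] ≤ ((1 − c)/c) · E[ℛ̂(W, Sₙ)] + (1/n) Σ_{i=1}^n ( I(W; Zᵢ)/(η' c) + ε/c ). -/

import Mathlib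

/-!
The Donsker–Varadhan formula for the law of `(W, Zᵢ)` against `P_W ⊗ μ`, applied to `-η' r`,
gives `-η' E[r(W, Zᵢ)] ≤ I(W; Zᵢ) + log E_{P_W ⊗ μ}[e^{-η' r}]`. Since `y ↦ y ^ (η' / v(ε))` is
concave, Jensen's inequality carries the `(v, c)`-central condition from the rate `v(ε)` down to
every `η' ≤ v(ε)`, bounding the log-moment by `η' (ε - c E_{P_W ⊗ μ}[r])`. Rearranging and
averaging over `i` gives the bound, because `E[ℰ(W, Sₙ)] = n⁻¹ ∑ᵢ (E_{P_W ⊗ μ}[r] - E[r(W, Zᵢ)])`.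

Most of the work is integrability: finite mutual information and the exponential moment make the
negative part of each `r(W, Zᵢ)` integrable (Young's inequality), so integrability of their sum
passes to each `r(W, Zᵢ)`; independence of the `Zᵢ` makes `ℓ(w*, ·)` integrable.
-/

open MeasureTheory ProbabilityTheory

/-- Real-valued Kullback–Leibler divergence `D(P‖Q) = ∫ log (dP/dQ) dP`. -/
noncomputable def klDivR {α : Type*} [MeasurableSpace α] (P Q : Measure α) : ℝ :=
  ∫ x, llr P Q x ∂P

section

open Real InformationTheory

lemma mul_le_klFun_add_exp_sub_one {t : ℝ} (ht : 0 ≤ t) (s : ℝ) :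
    t * s ≤ klFun t + exp s - 1 := by
  rcases ht.eq_or_lt with rfl | ht
  · simp [klFun_zero, (exp_pos s).le]
  have h := mul_le_mul_of_nonneg_left (add_one_le_exp (s - log t)) ht.le
  rw [exp_sub, exp_log ht, mul_div_cancel₀ _ ht.ne'] at h
  rw [klFun_apply]
  linarith

section Integrals

variable {α : Type*} [MeasurableSpace α] {μ ν : Measure α}

lemma log_integral_exp_neg_mul_le [IsProbabilityMeasure μ] {f : α → ℝ} {s t : ℝ}
    (hs : 0 < s) (hst : s ≤ t) (hs_int : Integrable (fun x ↦ exp (-s * f x)) μ)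
    (ht_int : Integrable (fun x ↦ exp (-t * f x)) μ) :
    log (∫ x, exp (-s * f x) ∂μ) ≤ s / t * log (∫ x, exp (-t * f x) ∂μ) := by
  have ht : 0 < t := hs.trans_le hst
  have hpow : ∀ x, exp (-s * f x) = exp (-t * f x) ^ (s / t) := fun x ↦ by
    rw [← exp_mul]; field_simp
  have hjensen : ∫ x, exp (-s * f x) ∂μ ≤ (∫ x, exp (-t * f x) ∂μ) ^ (s / t) := by
    simp only [hpow] at hs_int ⊢
    exact (concaveOn_rpow (by positivity) ((div_le_one ht).2 hst)).le_map_integral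
      (continuous_rpow_const (by positivity)).continuousOn isClosed_Ici
      (Filter.Eventually.of_forall fun x ↦ (exp_pos _).le) ht_int hs_int
  rw [← log_rpow (integral_exp_pos ht_int)]
  exact log_le_log (integral_exp_pos hs_int) hjensen

lemma log_integral_exp_neg_mul_le_of_le [IsProbabilityMeasure μ] {f : α → ℝ} {s t c ε : ℝ}
    (hs : 0 < s) (hst : s ≤ t) (hs_int : Integrable (fun x ↦ exp (-s * f x)) μ)
    (ht_int : Integrable (fun x ↦ exp (-t * f x)) μ)
    (hcentral : log (∫ x, exp (-t * f x) ∂μ) ≤ -c * t * ∫ x, f x ∂μ + t * ε) :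
    log (∫ x, exp (-s * f x) ∂μ) ≤ s * (-c * ∫ x, f x ∂μ + ε) := by
  have ht : 0 < t := hs.trans_le hst
  calc _ ≤ s / t * log (∫ x, exp (-t * f x) ∂μ) :=
        log_integral_exp_neg_mul_le hs hst hs_int ht_int
    _ ≤ s / t * (-c * t * ∫ x, f x ∂μ + t * ε) := by gcongr
    _ = s * (-c * ∫ x, f x ∂μ + ε) := by field_simp

lemma integrable_of_integrable_sum_of_integrable_max_neg {ι : Type*} [Fintype ι]
    {f : ι → α → ℝ} (hf : ∀ i, AEStronglyMeasurable (f i) μ)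
    (hsum : Integrable (fun x ↦ ∑ i, f i x) μ) (hneg : ∀ i, Integrable (fun x ↦ max (-f i x) 0) μ)
    (i : ι) : Integrable (f i) μ := by
  refine integrable_of_le_of_le (g₂ := fun x ↦ ∑ j, f j x + ∑ j, max (-f j x) 0) (hf i)
    (Filter.Eventually.of_forall fun x ↦ ?_) (Filter.Eventually.of_forall fun x ↦ ?_)
    (hneg i).neg (hsum.add (integrable_finsetSum _ fun j _ ↦ hneg j))
  · simpa using neg_le.1 (le_max_left (-f i x) 0)
  · have : ∀ j, f j x + max (-f j x) 0 = max (f j x) 0 := fun j ↦ by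
      rcases le_total (f j x) 0 with h | h <;> simp [h]
    calc f i x ≤ max (f i x) 0 := le_max_left _ _
      _ ≤ ∑ j, max (f j x) 0 := Finset.single_le_sum (f := fun j ↦ max (f j x) 0)
          (fun j _ ↦ le_max_right _ _) (Finset.mem_univ i)
      _ = _ := by simp only [← Finset.sum_add_distrib, this]

lemma integral_le_integral_llr_add_log_integral_exp [IsProbabilityMeasure μ]
    [IsProbabilityMeasure ν] (hμν : μ ≪ ν) (hllr : Integrable (llr μ ν) μ) {f : α → ℝ}
    (hf : Integrable f μ) (hef : Integrable (fun x ↦ exp (f x)) ν) :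
    ∫ x, f x ∂μ ≤ ∫ x, llr μ ν x ∂μ + log (∫ x, exp (f x) ∂ν) := by
  have : IsProbabilityMeasure (ν.tilted f) := isProbabilityMeasure_tilted hef
  have hgibbs := integral_llr_add_sub_measure_univ_nonneg
    (hμν.trans (absolutelyContinuous_tilted hef)) (integrable_llr_tilted_right hμν hf hllr hef)
  rw [integral_llr_tilted_right hμν hf hef hllr] at hgibbs
  simp only [probReal_univ] at hgibbs
  linarith

-- By Young's inequality `t s ≤ klFun t + e^s - 1`, `(dμ/dν) · t f⁻` is dominated by
-- `klFun (dμ/dν) + e^{-t f}`, which is `ν`-integrable.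
lemma integrable_max_neg_of_integrable_exp_neg_mul [IsFiniteMeasure μ] [IsFiniteMeasure ν]
    (hμν : μ ≪ ν) (hllr : Integrable (llr μ ν) μ) {f : α → ℝ} (hf : Measurable f) {t : ℝ}
    (ht : 0 < t) (hexp : Integrable (fun x ↦ exp (-t * f x)) ν) :
    Integrable (fun x ↦ max (-f x) 0) μ := by
  suffices Integrable (fun x ↦ (μ.rnDeriv ν x).toReal * (t * max (-f x) 0)) ν from
    (integrable_const_mul_iff ht.ne'.isUnit _).1 ((integrable_toReal_rnDeriv_mul_iff hμν).1 this)
  refine (((integrable_klFun_rnDeriv_iff hμν).2 hllr).add hexp).mono'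
    (by fun_prop) (Filter.Eventually.of_forall fun x ↦ ?_)
  have hyoung := mul_le_klFun_add_exp_sub_one (t := (μ.rnDeriv ν x).toReal)
    ENNReal.toReal_nonneg (t * max (-f x) 0)
  have hexp_max : exp (t * max (-f x) 0) ≤ exp (-t * f x) + 1 := by
    rcases le_total (-f x) 0 with h | h
    · simp [max_eq_right h, (exp_pos _).le]
    · simp [max_eq_left h]
  rw [Real.norm_eq_abs, abs_of_nonneg (by positivity), Pi.add_apply]
  linarith

lemma integral_sub_integral_le_of_log_integral_exp_le [IsProbabilityMeasure μ]
    [IsProbabilityMeasure ν] (hμν : μ ≪ ν) (hllr : Integrable (llr μ ν) μ) {f : α → ℝ}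
    (hf : Integrable f μ) {η c ε : ℝ} (hη : 0 < η) (hc : 0 < c)
    (hexp : Integrable (fun x ↦ exp (-η * f x)) ν)
    (hlog : log (∫ x, exp (-η * f x) ∂ν) ≤ η * (-c * ∫ x, f x ∂ν + ε)) :
    ∫ x, f x ∂ν - ∫ x, f x ∂μ
      ≤ (1 - c) / c * ∫ x, f x ∂μ + (∫ x, llr μ ν x ∂μ) / (η * c) + ε / c := by
  have hdv := integral_le_integral_llr_add_log_integral_exp hμν hllr (hf.const_mul (-η)) hexp
  rw [integral_const_mul] at hdv
  set a := ∫ x, f x ∂μ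
  set b := ∫ x, f x ∂ν
  set K := ∫ x, llr μ ν x ∂μ
  have hnum : 0 ≤ η * a + K + η * ε - η * c * b := by nlinarith
  have hrhs : (1 - c) / c * a + K / (η * c) + ε / c - (b - a)
      = (η * a + K + η * ε - η * c * b) / (η * c) := by
    field_simp
    ring
  exact sub_nonneg.1 (hrhs ▸ div_nonneg hnum (by positivity))

end Integrals

section Probability

variable {Ω : Type*} [MeasurableSpace Ω] {P : Measure Ω} [IsProbabilityMeasure P]

-- Fubini for `(x, y) ↦ x + y` under the law `P_X ⊗ P_Y` of `(X, Y)` makes `y ↦ x + y`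
-- integrable under `P_Y` for some `x`.
lemma ProbabilityTheory.IndepFun.integrable_right_of_integrable_add {X Y : Ω → ℝ}
    (hXY : IndepFun X Y P) (hX : Measurable X) (hY : Measurable Y)
    (h : Integrable (fun ω ↦ X ω + Y ω) P) : Integrable Y P := by
  have hlaw := (indepFun_iff_map_prod_eq_prod_map_map hX.aemeasurable hY.aemeasurable).1 hXY
  have hprod : Integrable (fun q : ℝ × ℝ ↦ q.1 + q.2) ((P.map X).prod (P.map Y)) := by
    rw [← hlaw, integrable_map_measure (by fun_prop) (by fun_prop)]
    exact h
  have : IsProbabilityMeasure (P.map X) := Measure.isProbabilityMeasure_map hX.aemeasurable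
  obtain ⟨x, hx⟩ := hprod.prod_right_ae.exists
  have hid : Integrable id (P.map Y) := by
    convert hx.sub (integrable_const x) using 1
    ext y
    simp
  exact (integrable_map_measure aestronglyMeasurable_id hY.aemeasurable).1 hid

lemma ProbabilityTheory.iIndepFun.integrable_of_integrable_sum {ι : Type*} [Fintype ι]
    {X : ι → Ω → ℝ} (hX : iIndepFun X P) (hmeas : ∀ i, Measurable (X i))
    (hsum : Integrable (fun ω ↦ ∑ i, X i ω) P) (i : ι) : Integrable (X i) P := by
  classical
  refine (hX.indepFun_finsetSum_of_notMem hmeas (Finset.notMem_erase i Finset.univ))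
    |>.integrable_right_of_integrable_add (by fun_prop) (hmeas i) ?_
  simpa [Finset.sum_erase_add _ _ (Finset.mem_univ i)] using hsum

lemma integrable_comp_of_integrable_sum_comp {ι β : Type*} [Fintype ι] [MeasurableSpace β]
    {ν : Measure β} [IsFiniteMeasure ν] {X : ι → Ω → β} (hX : ∀ i, Measurable (X i))
    (hac : ∀ i, P.map (X i) ≪ ν) (hllr : ∀ i, Integrable (llr (P.map (X i)) ν) (P.map (X i)))
    {g : β → ℝ} (hg : Measurable g) {t : ℝ} (ht : 0 < t)
    (hexp : Integrable (fun y ↦ exp (-t * g y)) ν)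
    (hsum : Integrable (fun ω ↦ ∑ i, g (X i ω)) P) (i : ι) :
    Integrable (fun ω ↦ g (X i ω)) P := by
  refine integrable_of_integrable_sum_of_integrable_max_neg (f := fun i ω ↦ g (X i ω))
    (fun i ↦ (hg.comp (hX i)).aestronglyMeasurable) hsum (fun i ↦ ?_) i
  have := integrable_max_neg_of_integrable_exp_neg_mul (hac i) (hllr i) hg ht hexp
  exact (integrable_map_measure (by fun_prop) (hX i).aemeasurable).1 this

lemma integral_sub_integral_comp_le_of_log_integral_exp_le {β : Type*} [MeasurableSpace β]
    {ν : Measure β} [IsProbabilityMeasure ν] {X : Ω → β} (hX : Measurable X)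
    (hac : P.map X ≪ ν) (hllr : Integrable (llr (P.map X) ν) (P.map X)) {g : β → ℝ}
    (hg : Measurable g) (hgX : Integrable (fun ω ↦ g (X ω)) P) {η c ε : ℝ} (hη : 0 < η)
    (hc : 0 < c) (hexp : Integrable (fun y ↦ exp (-η * g y)) ν)
    (hlog : log (∫ y, exp (-η * g y) ∂ν) ≤ η * (-c * ∫ y, g y ∂ν + ε)) :
    ∫ y, g y ∂ν - ∫ ω, g (X ω) ∂P
      ≤ (1 - c) / c * ∫ ω, g (X ω) ∂P + klDivR (P.map X) ν / (η * c) + ε / c := by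
  have : IsProbabilityMeasure (P.map X) := Measure.isProbabilityMeasure_map hX.aemeasurable
  have := integral_sub_integral_le_of_log_integral_exp_le hac hllr
    ((integrable_map_measure hg.aestronglyMeasurable hX.aemeasurable).2 hgX) hη hc hexp hlog
  rwa [integral_map hX.aemeasurable hg.aestronglyMeasurable] at this

end Probability

section LearningSetting

variable {Ω 𝒲 𝒵 : Type*} [MeasurableSpace Ω] [MeasurableSpace 𝒲] [MeasurableSpace 𝒵]
  {P : Measure Ω} [IsProbabilityMeasure P] {μ : Measure 𝒵} [IsProbabilityMeasure μ]
  {ℓ r : 𝒲 → 𝒵 → ℝ} {wstar : 𝒲}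
  {n : ℕ} {Z : Fin n → Ω → 𝒵} {W : Ω → 𝒲}

-- If `ℓ wstar` were not `μ`-integrable, neither would be `ℓ (W ω) = r (W ω) + ℓ wstar`, so
-- `∫ z, ℓ (W ω) z ∂μ` would be the junk value `0` and the integrand of the generalization error
-- would reduce to `-n⁻¹ ∑ ℓ (W ω) (Z i ω)`; its integrability would then make
-- `∑ ℓ wstar (Z i)` integrable, hence each summand by independence.
lemma integrable_loss_wstar (hℓw : Measurable (ℓ wstar)) (hZmeas : ∀ i, Measurable (Z i))
    (hZlaw : ∀ i, P.map (Z i) = μ) (hindep : iIndepFun Z P) (hW : Measurable W)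
    (hr : r = fun w z ↦ ℓ w z - ℓ wstar z)
    (hrInt : Integrable (fun p : 𝒲 × 𝒵 ↦ r p.1 p.2) ((P.map W).prod μ))
    (hgenInt : Integrable
      (fun ω ↦ (∫ z, ℓ (W ω) z ∂μ) - (n : ℝ)⁻¹ * ∑ i, ℓ (W ω) (Z i ω)) P)
    (hsum : Integrable (fun ω ↦ ∑ i, r (W ω) (Z i ω)) P) (i : Fin n) :
    Integrable (ℓ wstar) μ := by
  subst hr
  by_contra hℓw_int
  have hzero : ∀ᵐ ω ∂P, ∫ z, ℓ (W ω) z ∂μ = 0 := by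
    filter_upwards [ae_of_ae_map hW.aemeasurable hrInt.prod_right_ae] with ω hω
    refine integral_undef fun hℓ ↦ hℓw_int ?_
    simpa [Pi.sub_def] using hℓ.sub hω
  have hℓsum : Integrable (fun ω ↦ ∑ i, ℓ (W ω) (Z i ω)) P := by
    have hmean : Integrable (fun ω ↦ (n : ℝ)⁻¹ * ∑ i, ℓ (W ω) (Z i ω)) P :=
      hgenInt.neg.congr (by filter_upwards [hzero] with ω hω; simp [hω])
    simpa [Nat.cast_ne_zero.2 i.pos.ne'] using hmean.const_mul (n : ℝ)
  have hsum_wstar : Integrable (fun ω ↦ ∑ i, ℓ wstar (Z i ω)) P := by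
    simpa [Pi.sub_def, Finset.sum_sub_distrib] using hℓsum.sub hsum
  have hiid := (hindep.comp (fun _ ↦ ℓ wstar) fun _ ↦ hℓw).integrable_of_integrable_sum
    (fun j ↦ hℓw.comp (hZmeas j)) hsum_wstar i
  rw [← hZlaw i] at hℓw_int
  exact hℓw_int ((integrable_map_measure hℓw.aestronglyMeasurable (hZmeas i).aemeasurable).2 hiid)

lemma integral_generalization_error_eq (hn : 0 < n) (hZmeas : ∀ i, Measurable (Z i))
    (hZlaw : ∀ i, P.map (Z i) = μ) (hW : Measurable W) (hr : r = fun w z ↦ ℓ w z - ℓ wstar z)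
    (hℓw : Integrable (ℓ wstar) μ)
    (hrInt : Integrable (fun p : 𝒲 × 𝒵 ↦ r p.1 p.2) ((P.map W).prod μ))
    (hri : ∀ i, Integrable (fun ω ↦ r (W ω) (Z i ω)) P) :
    ∫ ω, ((∫ z, ℓ (W ω) z ∂μ) - (n : ℝ)⁻¹ * ∑ i, ℓ (W ω) (Z i ω)) ∂P
      = (n : ℝ)⁻¹ * ∑ i, ((∫ p, r p.1 p.2 ∂((P.map W).prod μ)) - ∫ ω, r (W ω) (Z i ω) ∂P) := by
  have hpop_int : Integrable (fun ω ↦ ∫ z, r (W ω) z ∂μ) P :=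
    (integrable_map_measure hrInt.aestronglyMeasurable.integral_prod_right'
      hW.aemeasurable).1 hrInt.integral_prod_left
  have hpop : ∫ ω, ∫ z, r (W ω) z ∂μ ∂P = ∫ p, r p.1 p.2 ∂((P.map W).prod μ) := by
    rw [integral_prod _ hrInt,
      integral_map hW.aemeasurable hrInt.aestronglyMeasurable.integral_prod_right']
  have hℓZ : ∀ i, Integrable (fun ω ↦ ℓ wstar (Z i ω)) P := fun i ↦ by
    rw [← hZlaw i] at hℓw
    exact (integrable_map_measure hℓw.aestronglyMeasurable (hZmeas i).aemeasurable).1 hℓw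
  have hℓZ_eq : ∀ i, ∫ ω, ℓ wstar (Z i ω) ∂P = ∫ z, ℓ wstar z ∂μ := fun i ↦ by
    rw [← hZlaw i] at hℓw ⊢
    rw [integral_map (hZmeas i).aemeasurable hℓw.aestronglyMeasurable]
  have hsplit : (fun ω ↦ (∫ z, ℓ (W ω) z ∂μ) - (n : ℝ)⁻¹ * ∑ i, ℓ (W ω) (Z i ω)) =ᵐ[P]
      fun ω ↦ (n : ℝ)⁻¹ * ∑ i, (((∫ z, r (W ω) z ∂μ) - r (W ω) (Z i ω))
        + ((∫ z, ℓ wstar z ∂μ) - ℓ wstar (Z i ω))) := by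
    filter_upwards [ae_of_ae_map hW.aemeasurable hrInt.prod_right_ae] with ω hω
    have hℓω : ∫ z, ℓ (W ω) z ∂μ = (∫ z, r (W ω) z ∂μ) + ∫ z, ℓ wstar z ∂μ := by
      rw [← integral_add hω hℓw]
      simp [hr]
    have hsummand : ∀ i, ((∫ z, r (W ω) z ∂μ) - r (W ω) (Z i ω))
        + ((∫ z, ℓ wstar z ∂μ) - ℓ wstar (Z i ω))
        = (∫ z, ℓ (W ω) z ∂μ) - ℓ (W ω) (Z i ω) := fun i ↦ by
      rw [hℓω, hr]
      ring
    simp only [hsummand, Finset.sum_sub_distrib, Finset.sum_const, Finset.card_univ,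
      Fintype.card_fin, nsmul_eq_mul]
    field_simp
  have hpop_sub : ∀ i, Integrable (fun ω ↦ (∫ z, r (W ω) z ∂μ) - r (W ω) (Z i ω)) P :=
    fun i ↦ hpop_int.sub (hri i)
  have hℓZ_sub : ∀ i, Integrable (fun ω ↦ (∫ z, ℓ wstar z ∂μ) - ℓ wstar (Z i ω)) P :=
    fun i ↦ (integrable_const _).sub (hℓZ i)
  rw [integral_congr_ae hsplit, integral_const_mul, integral_finsetSum _ fun i _ ↦ ?_]
  · congr 1
    refine Finset.sum_congr rfl fun i _ ↦ ?_
    rw [integral_add (hpop_sub i) (hℓZ_sub i), integral_sub hpop_int (hri i),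
      integral_sub (integrable_const _) (hℓZ i), hpop, hℓZ_eq, integral_const]
    simp
  · exact (hpop_sub i).add (hℓZ_sub i)

end LearningSetting

end

theorem v_c_central_generalization_bound_general
    {Ω 𝒲 𝒵 : Type*} [MeasurableSpace Ω] [MeasurableSpace 𝒲] [MeasurableSpace 𝒵]
    (P : Measure Ω) [IsProbabilityMeasure P]
    (μ : Measure 𝒵) [IsProbabilityMeasure μ]
    (ℓ : 𝒲 → 𝒵 → ℝ) (hℓ : Measurable (Function.uncurry ℓ))
    (n : ℕ) (hn : 0 < n)
    (Z : Fin n → Ω → 𝒵) (hZmeas : ∀ i, Measurable (Z i))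
    (hZlaw : ∀ i, P.map (Z i) = μ)
    (hindep : iIndepFun Z P)
    (W : Ω → 𝒲) (hW : Measurable W)
    (wstar : 𝒲)
    (r : 𝒲 → 𝒵 → ℝ) (hr : r = fun w z => ℓ w z - ℓ wstar z)
    (c : ℝ) (hc : 0 < c)
    (v : ℝ → ℝ)
    -- all expectations appearing are finite
    (hrInt : Integrable (fun p : 𝒲 × 𝒵 => r p.1 p.2) ((P.map W).prod μ))
    (hexpInt : ∀ η' : ℝ, 0 < η' →
      Integrable (fun p : 𝒲 × 𝒵 => Real.exp (-η' * r p.1 p.2)) ((P.map W).prod μ))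
    (hgenInt : Integrable
      (fun ω => (∫ z, ℓ (W ω) z ∂μ) - (n : ℝ)⁻¹ * ∑ i, ℓ (W ω) (Z i ω)) P)
    (hEmpInt : Integrable (fun ω => (n : ℝ)⁻¹ * ∑ i, r (W ω) (Z i ω)) P)
    (hac : ∀ i, P.map (fun ω => (W ω, Z i ω)) ≪ (P.map W).prod μ)
    (hllr : ∀ i, Integrable (llr (P.map (fun ω => (W ω, Z i ω))) ((P.map W).prod μ))
        (P.map (fun ω => (W ω, Z i ω))))
    -- the `(v, c)`-central condition
    (hcentral : ∀ ε : ℝ, 0 ≤ ε →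
      Real.log (∫ p, Real.exp (-(v ε) * r p.1 p.2) ∂((P.map W).prod μ))
        ≤ -c * v ε * (∫ p, r p.1 p.2 ∂((P.map W).prod μ)) + v ε * ε) :
    ∀ ε : ℝ, 0 ≤ ε → ∀ η' : ℝ, 0 < η' → η' ≤ v ε →
    ∫ ω, ((∫ z, ℓ (W ω) z ∂μ) - (n : ℝ)⁻¹ * ∑ i, ℓ (W ω) (Z i ω)) ∂P
      ≤ (1 - c) / c * (∫ ω, (n : ℝ)⁻¹ * ∑ i, r (W ω) (Z i ω) ∂P)
        + (n : ℝ)⁻¹ * ∑ i,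
            (klDivR (P.map (fun ω => (W ω, Z i ω))) ((P.map W).prod μ) / (η' * c) + ε / c) := by
  intro ε hε η hη hηv
  set Q := (P.map W).prod μ
  have : IsProbabilityMeasure (P.map W) := Measure.isProbabilityMeasure_map hW.aemeasurable
  have hpair : ∀ i, Measurable fun ω ↦ (W ω, Z i ω) := fun i ↦ hW.prodMk (hZmeas i)
  have hr_meas : Measurable fun p : 𝒲 × 𝒵 ↦ r p.1 p.2 := by
    subst hr
    exact hℓ.sub (hℓ.comp (measurable_const.prodMk measurable_snd))
  have hlog := log_integral_exp_neg_mul_le_of_le hη hηv (hexpInt η hη)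
    (hexpInt (v ε) (hη.trans_le hηv)) (hcentral ε hε)
  have hsum : Integrable (fun ω ↦ ∑ i, r (W ω) (Z i ω)) P := by
    simpa [Nat.cast_ne_zero.2 hn.ne'] using hEmpInt.const_mul (n : ℝ)
  have hri : ∀ i, Integrable (fun ω ↦ r (W ω) (Z i ω)) P :=
    integrable_comp_of_integrable_sum_comp hpair hac hllr hr_meas hη (hexpInt η hη) hsum
  have hℓw_meas : Measurable (ℓ wstar) := hℓ.comp measurable_prodMk_left
  have hℓw := integrable_loss_wstar hℓw_meas hZmeas hZlaw hindep hW hr hrInt hgenInt hsum ⟨0, hn⟩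
  have hkey := fun i ↦ integral_sub_integral_comp_le_of_log_integral_exp_le (hpair i) (hac i)
    (hllr i) hr_meas (hri i) hη hc (hexpInt η hη) hlog
  rw [integral_generalization_error_eq hn hZmeas hZlaw hW hr hℓw hrInt hri, integral_const_mul,
    integral_finsetSum _ fun i _ ↦ hri i]
  calc (n : ℝ)⁻¹ * ∑ i, (∫ p, r p.1 p.2 ∂Q - ∫ ω, r (W ω) (Z i ω) ∂P)
      ≤ (n : ℝ)⁻¹ * ∑ i, ((1 - c) / c * ∫ ω, r (W ω) (Z i ω) ∂P
        + (klDivR (P.map fun ω ↦ (W ω, Z i ω)) Q / (η * c) + ε / c)) := by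
        gcongr with i
        linarith [hkey i]
    _ = _ := by rw [Finset.sum_add_distrib, ← Finset.mul_sum]; ring

/-- **Theorem 5 (intermediate rate with the `(v, c)`-central condition).** -/
theorem v_c_central_generalization_bound
    {Ω 𝒲 𝒵 : Type*} [MeasurableSpace Ω] [MeasurableSpace 𝒲] [MeasurableSpace 𝒵]
    (P : Measure Ω) [IsProbabilityMeasure P]
    (μ : Measure 𝒵) [IsProbabilityMeasure μ]
    (ℓ : 𝒲 → 𝒵 → ℝ) (hℓ : Measurable (Function.uncurry ℓ))
    (n : ℕ) (hn : 0 < n)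
    (Z : Fin n → Ω → 𝒵) (hZmeas : ∀ i, Measurable (Z i))
    (hZlaw : ∀ i, P.map (Z i) = μ)
    (hindep : iIndepFun Z P)
    (W : Ω → 𝒲) (hW : Measurable W)
    (wstar : 𝒲) (hwstar : ∀ w, ∫ z, ℓ wstar z ∂μ ≤ ∫ z, ℓ w z ∂μ)
    (r : 𝒲 → 𝒵 → ℝ) (hr : r = fun w z => ℓ w z - ℓ wstar z)
    (c : ℝ) (hc : 0 < c) (hc1 : c < 1)
    -- `v` is a bounded non-decreasing function on `[0, ∞)`, positive on `(0, ∞)`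
    (v : ℝ → ℝ) (hvnonneg : ∀ ε, 0 ≤ ε → 0 ≤ v ε)
    (hvmono : ∀ ε₁ ε₂, 0 ≤ ε₁ → ε₁ ≤ ε₂ → v ε₁ ≤ v ε₂)
    (hvbdd : ∃ M : ℝ, ∀ ε, 0 ≤ ε → v ε ≤ M)
    (hvpos : ∀ ε, 0 < ε → 0 < v ε)
    -- all expectations appearing are finite
    (hrInt : Integrable (fun p : 𝒲 × 𝒵 => r p.1 p.2) ((P.map W).prod μ))
    (hexpInt : ∀ η' : ℝ, 0 < η' →
      Integrable (fun p : 𝒲 × 𝒵 => Real.exp (-η' * r p.1 p.2)) ((P.map W).prod μ))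
    (hgenInt : Integrable
      (fun ω => (∫ z, ℓ (W ω) z ∂μ) - (n : ℝ)⁻¹ * ∑ i, ℓ (W ω) (Z i ω)) P)
    (hEmpInt : Integrable (fun ω => (n : ℝ)⁻¹ * ∑ i, r (W ω) (Z i ω)) P)
    (hac : ∀ i, P.map (fun ω => (W ω, Z i ω)) ≪ (P.map W).prod μ)
    (hllr : ∀ i, Integrable (llr (P.map (fun ω => (W ω, Z i ω))) ((P.map W).prod μ))
        (P.map (fun ω => (W ω, Z i ω))))
    -- the `(v, c)`-central condition
    (hcentral : ∀ ε : ℝ, 0 ≤ ε →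
      Real.log (∫ p, Real.exp (-(v ε) * r p.1 p.2) ∂((P.map W).prod μ))
        ≤ -c * v ε * (∫ p, r p.1 p.2 ∂((P.map W).prod μ)) + v ε * ε) :
    ∀ ε : ℝ, 0 ≤ ε → ∀ η' : ℝ, 0 < η' → η' ≤ v ε →
    ∫ ω, ((∫ z, ℓ (W ω) z ∂μ) - (n : ℝ)⁻¹ * ∑ i, ℓ (W ω) (Z i ω)) ∂P
      ≤ (1 - c) / c * (∫ ω, (n : ℝ)⁻¹ * ∑ i, r (W ω) (Z i ω) ∂P)
        + (n : ℝ)⁻¹ * ∑ i,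
            (klDivR (P.map (fun ω => (W ω, Z i ω))) ((P.map W).prod μ) / (η' * c) + ε / c) :=
  v_c_central_generalization_bound_general P μ ℓ hℓ n hn Z hZmeas hZlaw hindep W hW wstar r hr c hc
    v hrInt hexpInt hgenInt hEmpInt hac hllr hcentral
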